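/- arXiv:2406.13522 — 2 statements merged into one kernel-verified Lean document; each statement's English description precedes it below -/
import Mathlib

section
/- Let W ≻ 0, λ ∈ (0,1), and A_K, Γ_w be matrices satisfying A_K W A_Kᵀ ⪯ λ² W and Γ_w ⪯ (1−λ)² W. Define the covariance recursion E_{ℓ+1} = A_K E_ℓ A_Kᵀ + Γ_w with E_0 = 0. Then for every ℓ ∈ ℕ, E_ℓ ⪯ (1 − λ^ℓ)² W. -/
/-!
Induction on `ℓ`. If `E ≤ c² W` with `c = 1 - λ^ℓ`, conjugating by `A_K` and adding `Γ_w` gives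
`A_K E A_Kᵀ + Γ_w ≤ (c²λ² + (1 - λ)²) W`, and the missing cross term `2λc(1 - λ) W` of
`(λc + 1 - λ)² W = (1 - λ^(ℓ+1))² W` is nonnegative. Only the Loewner order is used, so the
argument runs in any star-ordered real algebra.
-/

open Matrix

section StarOrderedAlgebra

variable {A : Type*} [Ring A] [StarRing A] [PartialOrder A] [StarOrderedRing A]
  [Algebra ℝ A] [StarModule ℝ A]

theorem conjugate_add_le_smul_of_le_smul {a w g e : A} {lam c : ℝ} (hw : 0 ≤ w)
    (hlam0 : 0 ≤ lam) (hlam1 : lam ≤ 1) (hc : 0 ≤ c)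
    (ha : a * w * star a ≤ lam ^ 2 • w) (hg : g ≤ (1 - lam) ^ 2 • w) (he : e ≤ c ^ 2 • w) :
    a * e * star a + g ≤ (lam * c + (1 - lam)) ^ 2 • w := by
  have hcross : 0 ≤ (2 * lam * c * (1 - lam)) • w :=
    smul_nonneg (by have := sub_nonneg.2 hlam1; positivity) hw
  calc a * e * star a + g ≤ c ^ 2 • (a * w * star a) + (1 - lam) ^ 2 • w := by
        grw [star_right_conjugate_le_conjugate he a, hg, mul_smul_comm, smul_mul_assoc]
    _ ≤ (c ^ 2 * lam ^ 2) • w + (1 - lam) ^ 2 • w := by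
        grw [ha, smul_smul]
    _ ≤ (c ^ 2 * lam ^ 2) • w + (1 - lam) ^ 2 • w + (2 * lam * c * (1 - lam)) • w :=
        le_add_of_nonneg_right hcross
    _ = (lam * c + (1 - lam)) ^ 2 • w := by
        simp only [← add_smul]; ring_nf

theorem le_one_sub_pow_sq_smul_of_conjugate_recursion {a w g : A} {lam : ℝ} (hw : 0 ≤ w)
    (hlam0 : 0 ≤ lam) (hlam1 : lam ≤ 1)
    (ha : a * w * star a ≤ lam ^ 2 • w) (hg : g ≤ (1 - lam) ^ 2 • w)
    {e : ℕ → A} (he0 : e 0 = 0) (hrec : ∀ ℓ, e (ℓ + 1) = a * e ℓ * star a + g) :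
    ∀ ℓ, e ℓ ≤ (1 - lam ^ ℓ) ^ 2 • w
  | 0 => by simp [he0]
  | ℓ + 1 => by
    have hc : 0 ≤ 1 - lam ^ ℓ := sub_nonneg.2 (pow_le_one₀ hlam0 hlam1)
    have hpow : 1 - lam ^ (ℓ + 1) = lam * (1 - lam ^ ℓ) + (1 - lam) := by ring
    rw [hrec, hpow]
    exact conjugate_add_le_smul_of_le_smul hw hlam0 hlam1 hc ha hg
      (le_one_sub_pow_sq_smul_of_conjugate_recursion hw hlam0 hlam1 ha hg he0 hrec ℓ)

end StarOrderedAlgebra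

theorem covariance_recursion_bound_general {n : ℕ}
    (A_K W Γ_w : Matrix (Fin n) (Fin n) ℝ)
    (hW : W.PosDef)
    (lam : ℝ) (hlam0 : 0 < lam) (hlam1 : lam < 1)
    (h1 : (lam ^ 2 • W - A_K * W * A_Kᵀ).PosSemidef)
    (h2 : ((1 - lam) ^ 2 • W - Γ_w).PosSemidef)
    (E : ℕ → Matrix (Fin n) (Fin n) ℝ)
    (hE0 : E 0 = 0)
    (hErec : ∀ ℓ, E (ℓ + 1) = A_K * E ℓ * A_Kᵀ + Γ_w) :
    ∀ ℓ, ((1 - lam ^ ℓ) ^ 2 • W - E ℓ).PosSemidef := by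
  have hstar : star A_K = A_Kᵀ := by
    rw [star_eq_conjTranspose, conjTranspose_eq_transpose_of_trivial]
  rw [← hstar] at h1 hErec
  open scoped MatrixOrder in
  exact le_one_sub_pow_sq_smul_of_conjugate_recursion hW.posSemidef.nonneg hlam0.le hlam1.le
    h1 h2 hE0 hErec

theorem covariance_recursion_bound {n : ℕ}
    (A_K W Γ_w : Matrix (Fin n) (Fin n) ℝ)
    (hW : W.PosDef) (hΓ : Γ_w.PosSemidef)
    (lam : ℝ) (hlam0 : 0 < lam) (hlam1 : lam < 1)
    (h1 : (lam ^ 2 • W - A_K * W * A_Kᵀ).PosSemidef)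
    (h2 : ((1 - lam) ^ 2 • W - Γ_w).PosSemidef)
    (E : ℕ → Matrix (Fin n) (Fin n) ℝ)
    (hE0 : E 0 = 0)
    (hErec : ∀ ℓ, E (ℓ + 1) = A_K * E ℓ * A_Kᵀ + Γ_w) :
    ∀ ℓ, ((1 - lam ^ ℓ) ^ 2 • W - E ℓ).PosSemidef :=
  covariance_recursion_bound_general A_K W Γ_w hW lam hlam0 hlam1 h1 h2 E hE0 hErec
end

section
/- Let λ ∈ (0,1), ρ > 0, n ∈ ℕ with n ≥ 1, and suppose ρ ≥ √(n(1−λ)/(1+λ)). Then for every ℓ ∈ ℕ and every r̄ ≥ ρ, (r̄ − ρ(1 − λ^{ℓ+1}))² + (1−λ)² λ^{2ℓ} n ≤ (r̄ − ρ(1 − λ^ℓ))². -/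
theorem expectation_step_inequality (lam ρ : ℝ) (n : ℕ) (hn : 1 ≤ n)
    (hlam0 : 0 < lam) (hlam1 : lam < 1) (hρ : 0 < ρ)
    (hbound : Real.sqrt ((n : ℝ) * (1 - lam) / (1 + lam)) ≤ ρ) :
    ∀ (ℓ : ℕ) (rb : ℝ), ρ ≤ rb →
      (rb - ρ * (1 - lam ^ (ℓ + 1))) ^ 2 + (1 - lam) ^ 2 * lam ^ (2 * ℓ) * n ≤
        (rb - ρ * (1 - lam ^ ℓ)) ^ 2 := by
  intro ℓ rb hrb
  have hx0 : (0:ℝ) ≤ (n : ℝ) * (1 - lam) / (1 + lam) := div_nonneg (mul_nonneg (Nat.cast_nonneg n) (by linarith)) (by linarith)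
  have hsq : (n : ℝ) * (1 - lam) / (1 + lam) ≤ ρ ^ 2 := by
    have := Real.sq_sqrt hx0
    nlinarith [Real.sqrt_nonneg ((n : ℝ) * (1 - lam) / (1 + lam))]
  have hkey : (n : ℝ) * (1 - lam) ≤ ρ ^ 2 * (1 + lam) := by
    rw [div_le_iff₀ (by linarith)] at hsq
    linarith
  have hp : (0:ℝ) < lam ^ ℓ := pow_pos hlam0 ℓ
  have hp1 : lam ^ ℓ ≤ 1 := pow_le_one₀ hlam0.le hlam1.le
  have h2 : lam ^ (2 * ℓ) = (lam ^ ℓ) ^ 2 := by rw [pow_mul]; ring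
  have h1 : lam ^ (ℓ + 1) = lam ^ ℓ * lam := pow_succ lam ℓ
  rw [h2, h1]
  have ha : ρ * lam ^ ℓ ≤ rb - ρ * (1 - lam ^ ℓ) := by nlinarith
  nlinarith [mul_le_mul_of_nonneg_left hkey (mul_nonneg hp.le (by linarith : (0:ℝ) ≤ 1 - lam)),
    mul_le_mul_of_nonneg_right ha (mul_nonneg hρ.le (mul_nonneg hp.le (by linarith : (0:ℝ) ≤ 1 - lam))),
    sq_nonneg (lam ^ ℓ), mul_pos hp hρ]
end
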